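/- arXiv:2304.08819 — 2 statements merged into one kernel-verified Lean document; each statement's English description precedes it below -/
import Mathlib

section
/- Assume ∫_{(0,∞)} z dμ_F(z) < (1+θ)·∫_{(0,∞)} z dμ_F̂(z) < ∞. Then the limit L := lim_{a→0+} v(a) exists and satisfies −(1+θ)·∫_{(0,∞)} z dμ_F̂(z) ≤ L ≤ ∫_{(0,∞)} z dμ_F(z) − (1+θ)·∫_{(0,∞)} z dμ_F̂(z) < 0. -/
/-!
Since `J_a(H)` is nondecreasing in `a`, so is `v`, and its right limit at `0` is `inf_{a>0} v(a)`.
Every admissible `H` satisfies `0 ≤ H(z) ≤ z`, so `J_a(H) ≥ -(1+θ)∫ z dμ_F̂`, while `H = 0` gives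
`v ≤ 0`; hence the limit is finite. For the upper bound, test `v(a)` with the truncation
`H = min(·, n)`: as `μ_F(0,∞) ≤ 1`, `v(a) ≤ a n²/2 + ∫ z dμ_F - (1+θ)∫ min(z, n) dμ_F̂`.
Let `a → 0`, then `n → ∞` by monotone convergence. Truncating is necessary because `μ_F` need not
have a second moment, in which case `J_a(id) = ∞`.
-/

open MeasureTheory Set Filter Topology
open scoped ENNReal

noncomputable section

/-- The admissible set 𝒜: functions `H : [0,∞) → [0,∞)` with `H 0 = 0` that are
nondecreasing and 1-Lipschitz (extended to `ℝ`, with the conditions imposed on `[0,∞)`). -/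
def Adm : Set (ℝ → ℝ) :=
  {H | H 0 = 0 ∧ (∀ z, 0 ≤ z → 0 ≤ H z) ∧ MonotoneOn H (Set.Ici 0) ∧
    LipschitzOnWith 1 H (Set.Ici 0)}

/-- The objective functional
`J_a(H) = ∫_{(0,∞)} ((a/2)·H² + H) dμ_F − (1+θ)·∫_{(0,∞)} H dμ_F̂`, valued in `EReal`. -/
def Jfun (μF μFhat : Measure ℝ) (θ a : ℝ) (H : ℝ → ℝ) : EReal :=
  ((∫⁻ z in Set.Ioi (0:ℝ), ENNReal.ofReal (a / 2 * H z ^ 2 + H z) ∂μF : ℝ≥0∞) : EReal)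
    - ((ENNReal.ofReal (1 + θ) * ∫⁻ z in Set.Ioi (0:ℝ), ENNReal.ofReal (H z) ∂μFhat : ℝ≥0∞) : EReal)

/-- `v(a) = inf_{H ∈ 𝒜} J_a(H)`. -/
def vfun (μF μFhat : Measure ℝ) (θ : ℝ) (a : ℝ) : EReal :=
  ⨅ H ∈ Adm, Jfun μF μFhat θ a H

namespace Adm

lemma le_self {H : ℝ → ℝ} (hH : H ∈ Adm) {z : ℝ} (hz : 0 ≤ z) : H z ≤ z := by
  obtain ⟨h0, -, -, hlip⟩ := hH
  have hdist := hlip.dist_le_mul z hz 0 self_mem_Ici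
  simp only [h0, NNReal.coe_one, one_mul, Real.dist_eq, sub_zero, abs_of_nonneg hz] at hdist
  exact (le_abs_self _).trans hdist

lemma const_zero_mem : (fun _ : ℝ => (0 : ℝ)) ∈ Adm :=
  ⟨rfl, fun _ _ => le_rfl, monotoneOn_const,
    ((LipschitzWith.const (0 : ℝ)).weaken zero_le_one).lipschitzOnWith⟩

lemma min_const_mem {c : ℝ} (hc : 0 ≤ c) : (fun z : ℝ => min z c) ∈ Adm :=
  ⟨min_eq_left hc, fun _ hz => le_min hz hc, fun _ _ _ _ hxy => min_le_min hxy le_rfl,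
    (LipschitzWith.id.min_const c).lipschitzOnWith⟩

end Adm

lemma StieltjesFunction.measure_Ioi_le_one (F : StieltjesFunction ℝ)
    (hF : Tendsto F atTop (𝓝 1)) {x : ℝ} (hx : 0 ≤ F x) : F.measure (Ioi x) ≤ 1 := by
  rw [F.measure_Ioi hF x]
  exact ENNReal.ofReal_le_one.2 (by linarith)

lemma tendsto_lintegral_ofReal_min_natCast (μ : Measure ℝ) :
    Tendsto (fun n : ℕ => ∫⁻ z, ENNReal.ofReal (min z n) ∂μ) atTop
      (𝓝 (∫⁻ z, ENNReal.ofReal z ∂μ)) := by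
  refine lintegral_tendsto_of_tendsto_of_monotone
    (fun n => (measurable_id.min measurable_const).ennreal_ofReal.aemeasurable)
    (ae_of_all _ fun z m n hmn ↦
      ENNReal.ofReal_le_ofReal (min_le_min le_rfl (by exact_mod_cast hmn)))
    (ae_of_all _ fun z => tendsto_atTop_of_eventually_const (i₀ := ⌈z⌉₊) fun n hn => ?_)
  rw [min_eq_left ((Nat.le_ceil z).trans (by exact_mod_cast hn))]

lemma Monotone.exists_real_tendsto_nhdsGT {f : ℝ → EReal} (hf : Monotone f) {x b m : ℝ}
    (hm : ∀ a, (m : EReal) ≤ f a) (hxb : x < b) (hb : f b ≠ ⊤) :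
    ∃ L : ℝ, Tendsto f (𝓝[>] x) (𝓝 L) ∧ m ≤ L ∧ ∀ a, x < a → (L : EReal) ≤ f a := by
  set ℓ := sInf (f '' Ioi x)
  have hℓ_le : ∀ a, x < a → ℓ ≤ f a := fun a ha => sInf_le (mem_image_of_mem f ha)
  have hm_le : (m : EReal) ≤ ℓ := le_sInf (by rintro _ ⟨a, -, rfl⟩; exact hm a)
  have hℓ : ((ℓ.toReal : ℝ) : EReal) = ℓ :=
    EReal.coe_toReal (ne_top_of_le_ne_top hb (hℓ_le b hxb))
      (ne_bot_of_le_ne_bot (EReal.coe_ne_bot m) hm_le)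
  refine ⟨ℓ.toReal, ?_, EReal.coe_le_coe_iff.1 (hℓ ▸ hm_le), fun a ha => hℓ ▸ hℓ_le a ha⟩
  rw [hℓ]
  exact hf.tendsto_nhdsGT x

section Functional

variable (μF μh : Measure ℝ) (θ : ℝ)

lemma Jfun_const_zero (a : ℝ) : Jfun μF μh θ a (fun _ => 0) = 0 := by
  simp [Jfun]

lemma Jfun_mono_param (H : ℝ → ℝ) : Monotone fun a => Jfun μF μh θ a H := fun a b hab =>
  EReal.sub_le_sub (EReal.coe_ennreal_le_coe_ennreal_iff.2 (lintegral_mono fun z =>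
    ENNReal.ofReal_le_ofReal (by nlinarith [sq_nonneg (H z)]))) le_rfl

lemma vfun_mono : Monotone (vfun μF μh θ) := fun _ _ hab =>
  iInf₂_mono fun H _ => Jfun_mono_param μF μh θ H hab

lemma vfun_nonpos (a : ℝ) : vfun μF μh θ a ≤ 0 :=
  (iInf₂_le _ Adm.const_zero_mem).trans_eq (Jfun_const_zero μF μh θ a)

lemma neg_le_vfun (a : ℝ) :
    -((ENNReal.ofReal (1 + θ) * ∫⁻ z in Ioi 0, ENNReal.ofReal z ∂μh : ℝ≥0∞) : EReal) ≤
      vfun μF μh θ a := by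
  refine le_iInf₂ fun H hH => ?_
  rw [← zero_sub]
  refine EReal.sub_le_sub (EReal.coe_ennreal_nonneg _)
    (EReal.coe_ennreal_le_coe_ennreal_iff.2 ?_)
  exact mul_le_mul_right (setLIntegral_mono ENNReal.measurable_ofReal fun z hz =>
    ENNReal.ofReal_le_ofReal (Adm.le_self hH (le_of_lt hz))) _

variable {μF μh θ}

lemma setLIntegral_Ioi_quadratic_min_le (hμF : μF (Ioi 0) ≤ 1) {a c : ℝ} (ha : 0 ≤ a)
    (hc : 0 ≤ c) :
    ∫⁻ z in Ioi 0, ENNReal.ofReal (a / 2 * min z c ^ 2 + min z c) ∂μF ≤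
      ENNReal.ofReal (a / 2 * c ^ 2) + ∫⁻ z in Ioi 0, ENNReal.ofReal z ∂μF :=
  calc ∫⁻ z in Ioi 0, ENNReal.ofReal (a / 2 * min z c ^ 2 + min z c) ∂μF
      ≤ ∫⁻ z in Ioi 0, (ENNReal.ofReal (a / 2 * c ^ 2) + ENNReal.ofReal z) ∂μF := by
        refine setLIntegral_mono (measurable_const.add ENNReal.measurable_ofReal) fun z hz => ?_
        have hsq : min z c ^ 2 ≤ c ^ 2 :=
          pow_le_pow_left₀ (le_min (le_of_lt hz) hc) (min_le_right _ _) 2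
        refine (ENNReal.ofReal_le_ofReal ?_).trans ENNReal.ofReal_add_le
        have hmin := min_le_left z c
        gcongr
    _ = ENNReal.ofReal (a / 2 * c ^ 2) * μF (Ioi 0) + ∫⁻ z in Ioi 0, ENNReal.ofReal z ∂μF := by
        rw [lintegral_add_left measurable_const, setLIntegral_const]
    _ ≤ ENNReal.ofReal (a / 2 * c ^ 2) + ∫⁻ z in Ioi 0, ENNReal.ofReal z ∂μF := by
        gcongr
        exact mul_le_of_le_one_right' hμF

lemma vfun_le_truncation (hμF : μF (Ioi 0) ≤ 1)
    (hA : ∫⁻ z in Ioi 0, ENNReal.ofReal z ∂μF ≠ ∞)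
    (hB : ENNReal.ofReal (1 + θ) * ∫⁻ z in Ioi 0, ENNReal.ofReal z ∂μh ≠ ∞)
    {a c : ℝ} (ha : 0 ≤ a) (hc : 0 ≤ c) :
    vfun μF μh θ a ≤ ((a / 2 * c ^ 2 + (∫⁻ z in Ioi 0, ENNReal.ofReal z ∂μF).toReal -
      (ENNReal.ofReal (1 + θ) * ∫⁻ z in Ioi 0, ENNReal.ofReal (min z c) ∂μh).toReal : ℝ) :
        EReal) := by
  have hBc : ENNReal.ofReal (1 + θ) * ∫⁻ z in Ioi 0, ENNReal.ofReal (min z c) ∂μh ≠ ∞ :=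
    ne_top_of_le_ne_top hB (mul_le_mul_right (setLIntegral_mono ENNReal.measurable_ofReal
      fun z _ => ENNReal.ofReal_le_ofReal (min_le_left z c)) _)
  refine (iInf₂_le _ (Adm.min_const_mem hc)).trans ?_
  rw [EReal.coe_sub, EReal.coe_ennreal_toReal hBc,
    ← ENNReal.toReal_ofReal (by positivity : 0 ≤ a / 2 * c ^ 2),
    ← ENNReal.toReal_add ENNReal.ofReal_ne_top hA,
    EReal.coe_ennreal_toReal (ENNReal.add_ne_top.2 ⟨ENNReal.ofReal_ne_top, hA⟩)]
  exact EReal.sub_le_sub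
    (EReal.coe_ennreal_le_coe_ennreal_iff.2 (setLIntegral_Ioi_quadratic_min_le hμF ha hc)) le_rfl

lemma le_moment_sub_of_le_vfun (hμF : μF (Ioi 0) ≤ 1)
    (hA : ∫⁻ z in Ioi 0, ENNReal.ofReal z ∂μF ≠ ∞)
    (hB : ENNReal.ofReal (1 + θ) * ∫⁻ z in Ioi 0, ENNReal.ofReal z ∂μh ≠ ∞)
    {L : ℝ} (hL : ∀ a, 0 < a → (L : EReal) ≤ vfun μF μh θ a) :
    L ≤ (∫⁻ z in Ioi 0, ENNReal.ofReal z ∂μF).toReal -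
      (ENNReal.ofReal (1 + θ) * ∫⁻ z in Ioi 0, ENNReal.ofReal z ∂μh).toReal := by
  set A := (∫⁻ z in Ioi 0, ENNReal.ofReal z ∂μF).toReal
  set B : ℕ → ℝ≥0∞ := fun n ↦ ENNReal.ofReal (1 + θ) * ∫⁻ z in Ioi 0, ENNReal.ofReal (min z n) ∂μh
  have htrunc (n : ℕ) : L ≤ A - (B n).toReal := by
    have hbound : Tendsto (fun a : ℝ ↦ a / 2 * (n : ℝ) ^ 2 + A - (B n).toReal) (𝓝[>] 0)
        (𝓝 (A - (B n).toReal)) :=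
      tendsto_nhdsWithin_of_tendsto_nhds (Continuous.tendsto' (by fun_prop) _ _ (by ring))
    refine ge_of_tendsto hbound (eventually_nhdsWithin_of_forall fun a ha ↦ ?_)
    exact EReal.coe_le_coe_iff.1
      ((hL a ha).trans (vfun_le_truncation hμF hA hB (le_of_lt ha) n.cast_nonneg))
  have hB_tendsto : Tendsto B atTop (𝓝 (ENNReal.ofReal (1 + θ) *
      ∫⁻ z in Ioi 0, ENNReal.ofReal z ∂μh)) :=
    ENNReal.Tendsto.const_mul (tendsto_lintegral_ofReal_min_natCast _)
      (Or.inr ENNReal.ofReal_ne_top)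
  exact ge_of_tendsto (tendsto_const_nhds.sub ((ENNReal.tendsto_toReal hB).comp hB_tendsto))
    (Eventually.of_forall htrunc)

end Functional

theorem stmt_3_general
    (F Fhat : StieltjesFunction ℝ) (θ : ℝ)
    (hF_neg : ∀ z : ℝ, z < 0 → F z = 0)
    (hF_top : Tendsto (fun z => F z) atTop (nhds 1))
    (hmom : (∫⁻ z in Set.Ioi (0:ℝ), ENNReal.ofReal z ∂F.measure) <
        ENNReal.ofReal (1 + θ) * ∫⁻ z in Set.Ioi (0:ℝ), ENNReal.ofReal z ∂Fhat.measure)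
    (hfin : ENNReal.ofReal (1 + θ) *
        (∫⁻ z in Set.Ioi (0:ℝ), ENNReal.ofReal z ∂Fhat.measure) < ⊤) :
    ∃ L : ℝ,
      Tendsto (fun a => vfun F.measure Fhat.measure θ a)
        (nhdsWithin 0 (Set.Ioi 0)) (nhds (L : EReal)) ∧
      -((ENNReal.ofReal (1 + θ) *
          (∫⁻ z in Set.Ioi (0:ℝ), ENNReal.ofReal z ∂Fhat.measure)).toReal) ≤ L ∧
      L ≤ (∫⁻ z in Set.Ioi (0:ℝ), ENNReal.ofReal z ∂F.measure).toReal -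
          (ENNReal.ofReal (1 + θ) *
            (∫⁻ z in Set.Ioi (0:ℝ), ENNReal.ofReal z ∂Fhat.measure)).toReal ∧
      (∫⁻ z in Set.Ioi (0:ℝ), ENNReal.ofReal z ∂F.measure).toReal -
          (ENNReal.ofReal (1 + θ) *
            (∫⁻ z in Set.Ioi (0:ℝ), ENNReal.ofReal z ∂Fhat.measure)).toReal < 0 := by
  have hA := (hmom.trans hfin).ne
  have hμF : F.measure (Ioi 0) ≤ 1 :=
    F.measure_Ioi_le_one hF_top
      ((hF_neg (-1) (by norm_num)).symm.le.trans (F.mono (by norm_num)))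
  have hlow : ∀ a, ((-(ENNReal.ofReal (1 + θ) *
      ∫⁻ z in Ioi 0, ENNReal.ofReal z ∂Fhat.measure).toReal : ℝ) : EReal) ≤
        vfun F.measure Fhat.measure θ a := by
    intro a
    rw [EReal.coe_neg, EReal.coe_ennreal_toReal hfin.ne]
    exact neg_le_vfun _ _ _ a
  obtain ⟨L, hlim, hL_low, hL_le⟩ :=
    (vfun_mono F.measure Fhat.measure θ).exists_real_tendsto_nhdsGT hlow one_pos
      ((vfun_nonpos _ _ _ 1).trans_lt EReal.zero_lt_top).ne
  exact ⟨L, hlim, hL_low, le_moment_sub_of_le_vfun hμF hA hfin.ne hL_le,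
    sub_neg.2 ((ENNReal.toReal_lt_toReal hA hfin.ne).2 hmom)⟩

/-- the limit L = lim_{a→0+} v(a) exists and satisfies
−(1+θ)∫z dμ_F̂ ≤ L ≤ ∫z dμ_F − (1+θ)∫z dμ_F̂ < 0. -/
theorem stmt_3
    (F Fhat : StieltjesFunction ℝ) (g : ℝ → ℝ) (θ0 θ : ℝ)
    (hF_neg : ∀ z : ℝ, z < 0 → F z = 0)
    (hF_top : Tendsto (fun z => F z) atTop (nhds 1))
    (hg_mono : MonotoneOn g (Set.Icc 0 1))
    (hg_left : ∀ p ∈ Set.Ioc (0:ℝ) 1, Tendsto g (nhdsWithin p (Set.Iio p)) (nhds (g p)))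
    (hg_zero : g 0 = 0)
    (hg_zero' : Tendsto g (nhdsWithin 0 (Set.Ioi 0)) (nhds 0))
    (hg_one : g 1 = 1)
    (hg_pos : 0 < g (1 - F 0))
    (hθ0 : -1 < θ0)
    (hθ : θ = (1 + θ0) * g (1 - F 0) - 1)
    (hFhat : ∀ z : ℝ, Fhat z = if z < 0 then 0 else 1 - g (1 - F z) / g (1 - F 0))
    (hFhat_top : Tendsto (fun z => Fhat z) atTop (nhds 1))
    (hmom : (∫⁻ z in Set.Ioi (0:ℝ), ENNReal.ofReal z ∂F.measure) <
        ENNReal.ofReal (1 + θ) * ∫⁻ z in Set.Ioi (0:ℝ), ENNReal.ofReal z ∂Fhat.measure)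
    (hfin : ENNReal.ofReal (1 + θ) *
        (∫⁻ z in Set.Ioi (0:ℝ), ENNReal.ofReal z ∂Fhat.measure) < ⊤) :
    ∃ L : ℝ,
      Tendsto (fun a => vfun F.measure Fhat.measure θ a)
        (nhdsWithin 0 (Set.Ioi 0)) (nhds (L : EReal)) ∧
      -((ENNReal.ofReal (1 + θ) *
          (∫⁻ z in Set.Ioi (0:ℝ), ENNReal.ofReal z ∂Fhat.measure)).toReal) ≤ L ∧
      L ≤ (∫⁻ z in Set.Ioi (0:ℝ), ENNReal.ofReal z ∂F.measure).toReal -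
          (ENNReal.ofReal (1 + θ) *
            (∫⁻ z in Set.Ioi (0:ℝ), ENNReal.ofReal z ∂Fhat.measure)).toReal ∧
      (∫⁻ z in Set.Ioi (0:ℝ), ENNReal.ofReal z ∂F.measure).toReal -
          (ENNReal.ofReal (1 + θ) *
            (∫⁻ z in Set.Ioi (0:ℝ), ENNReal.ofReal z ∂Fhat.measure)).toReal < 0 :=
  stmt_3_general F Fhat θ hF_neg hF_top hmom hfin
end
end

section
/- Assume (1+θ)·∫_{(0,∞)} z dμ_F̂(z) < ∞. Then for every a > 0 the infimum defining v(a) is attained: there exists H* ∈ 𝒜 such that J_a(H*) ≤ J_a(H) for all H ∈ 𝒜, i.e., J_a(H*) = v(a). -/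
open MeasureTheory Set Filter Topology
open scoped ENNReal

noncomputable section

/-!
The direct method of the calculus of variations. Admissible functions are 1-Lipschitz with
`0 ≤ H z ≤ z`, so by an Arzelà–Ascoli diagonal argument a minimizing sequence has a subsequence
converging pointwise to some `H* ∈ 𝒜`. Along it the first integral of `J_a` is lower
semicontinuous by Fatou's lemma, while the second one converges by dominated convergence, the
dominating function `z` being `(1+θ)μ_F̂`-integrable by assumption. Hence `J_a(H*) ≤ v(a)`.
-/

open scoped NNReal

section EquiLipschitz

variable {X : Type*} [PseudoMetricSpace X] {K : ℝ≥0}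

theorem cauchySeq_apply_of_dense {α : Type*} [PseudoMetricSpace α] {f : ℕ → X → α}
    (hf : ∀ n, LipschitzWith K (f n)) {D : Set X} (hD : Dense D)
    (hfD : ∀ d ∈ D, CauchySeq fun n => f n d) (x : X) : CauchySeq fun n => f n x := by
  rw [Metric.cauchySeq_iff]
  intro ε hε
  have hδ : 0 < ε / (3 * (K + 1)) := by positivity
  obtain ⟨d, hdD, hxd⟩ := hD.exists_dist_lt x hδ
  obtain ⟨N, hN⟩ := Metric.cauchySeq_iff.1 (hfD d hdD) (ε / 3) (by positivity)
  have hclose : ∀ n, dist (f n x) (f n d) < ε / 3 := fun n =>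
    calc dist (f n x) (f n d) ≤ K * dist x d := (hf n).dist_le_mul x d
      _ ≤ (K + 1) * dist x d := by gcongr; linarith
      _ < (K + 1) * (ε / (3 * (K + 1))) := by gcongr
      _ = ε / 3 := by field_simp
  refine ⟨N, fun m hm k hk => ?_⟩
  calc dist (f m x) (f k x)
      ≤ dist (f m x) (f m d) + dist (f m d) (f k d) + dist (f k d) (f k x) :=
        dist_triangle4 _ _ _ _
    _ < ε / 3 + ε / 3 + ε / 3 := by
        gcongr
        · exact hclose m
        · exact hN m hm k hk
        · rw [dist_comm]; exact hclose k
    _ = ε := by ring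

theorem exists_subseq_tendsto_of_lipschitzWith [TopologicalSpace.SeparableSpace X]
    {f : ℕ → X → ℝ} (hf : ∀ n, LipschitzWith K (f n)) (hbdd : ∀ x, ∃ C, ∀ n, |f n x| ≤ C) :
    ∃ g : X → ℝ, ∃ φ : ℕ → ℕ, StrictMono φ ∧ ∀ x, Tendsto (fun n => f (φ n) x) atTop (𝓝 (g x)) := by
  obtain ⟨D, hDc, hDd⟩ := TopologicalSpace.exists_countable_dense X
  have := hDc.to_subtype
  choose C hC using hbdd
  have hK : IsCompact (univ.pi fun d : D => Icc (-C d) (C d)) :=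
    isCompact_univ_pi fun _ => isCompact_Icc
  obtain ⟨y, -, φ, hφ, hlim⟩ := hK.tendsto_subseq (x := fun n (d : D) => f n d)
    fun n => mem_univ_pi.2 fun d => abs_le.1 (hC d n)
  have hcauchy (x : X) : CauchySeq fun n => f (φ n) x :=
    cauchySeq_apply_of_dense (fun n => hf (φ n)) hDd
      (fun d hd => (((continuous_apply (⟨d, hd⟩ : D)).tendsto _).comp hlim).cauchySeq) x
  exact ⟨fun x => limUnder atTop fun n => f (φ n) x, φ, hφ,
    fun x => (hcauchy x).tendsto_limUnder⟩

end EquiLipschitz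

theorem lintegral_le_liminf_of_tendsto {α ι : Type*} [MeasurableSpace α] {μ : Measure α}
    {u : Filter ι} [u.NeBot] [u.IsCountablyGenerated] {f : ι → α → ℝ≥0∞} {g : α → ℝ≥0∞}
    (hf : ∀ i, AEMeasurable (f i) μ) (hlim : ∀ᵐ x ∂μ, Tendsto (fun i => f i x) u (𝓝 (g x))) :
    ∫⁻ x, g x ∂μ ≤ liminf (fun i => ∫⁻ x, f i x ∂μ) u :=
  calc ∫⁻ x, g x ∂μ = ∫⁻ x, liminf (fun i => f i x) u ∂μ :=
        lintegral_congr_ae (hlim.mono fun _ hx => hx.liminf_eq.symm)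
    _ ≤ _ := lintegral_liminf_le' hf

namespace Adm

variable {H : ℝ → ℝ}

theorem apply_le (hH : H ∈ Adm) {z : ℝ} (hz : 0 ≤ z) : H z ≤ z := by
  have := hH.2.2.2.dist_le_mul z hz 0 self_mem_Ici
  rw [hH.1, Real.dist_eq, Real.dist_eq, sub_zero, sub_zero, NNReal.coe_one, one_mul,
    abs_of_nonneg hz] at this
  exact (le_abs_self _).trans this

theorem zero_mem : (0 : ℝ → ℝ) ∈ Adm :=
  ⟨rfl, fun _ _ => le_rfl, fun _ _ _ _ _ => le_rfl,
    (LipschitzWith.const' (0 : ℝ)).lipschitzOnWith.weaken zero_le_one⟩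

theorem of_tendsto {ι : Type*} {l : Filter ι} [l.NeBot] {H : ι → ℝ → ℝ} {Hs : ℝ → ℝ}
    (hH : ∀ i, H i ∈ Adm) (hlim : ∀ z, 0 ≤ z → Tendsto (fun i => H i z) l (𝓝 (Hs z))) :
    Hs ∈ Adm := by
  refine ⟨tendsto_nhds_unique (hlim 0 le_rfl) ?_, fun z hz => ?_, fun z hz y hy hzy => ?_,
    LipschitzOnWith.mk_one fun z hz y hy => ?_⟩
  · simp only [(hH _).1, tendsto_const_nhds]
  · exact ge_of_tendsto' (hlim z hz) fun i => (hH i).2.1 z hz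
  · exact le_of_tendsto_of_tendsto' (hlim z hz) (hlim y hy) fun i => (hH i).2.2.1 hz hy hzy
  · exact le_of_tendsto' ((hlim z hz).dist (hlim y hy)) fun i => by
      simpa using (hH i).2.2.2.dist_le_mul z hz y hy

theorem exists_subseq_tendsto {H : ℕ → ℝ → ℝ} (hH : ∀ n, H n ∈ Adm) :
    ∃ Hs ∈ Adm, ∃ φ : ℕ → ℕ, StrictMono φ ∧
      ∀ z, 0 ≤ z → Tendsto (fun n => H (φ n) z) atTop (𝓝 (Hs z)) := by
  have hlip (n : ℕ) : LipschitzWith 1 fun z => H n (max z 0) :=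
    LipschitzWith.mk_one fun x y =>
      calc dist (H n (max x 0)) (H n (max y 0)) ≤ 1 * dist (max x 0) (max y 0) :=
            (hH n).2.2.2.dist_le_mul _ (mem_Ici.2 (le_max_right _ _))
              _ (mem_Ici.2 (le_max_right _ _))
        _ ≤ dist x y := by
          rw [one_mul, Real.dist_eq, Real.dist_eq]; exact abs_max_sub_max_le_abs _ _ _
  have hbdd (x : ℝ) : ∃ C, ∀ n, |H n (max x 0)| ≤ C :=
    ⟨max x 0, fun n => by
      rw [abs_of_nonneg ((hH n).2.1 _ (le_max_right _ _))]
      exact apply_le (hH n) (le_max_right _ _)⟩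
  obtain ⟨Hs, φ, hφ, hlim⟩ := exists_subseq_tendsto_of_lipschitzWith hlip hbdd
  have hlim' (z : ℝ) (hz : 0 ≤ z) : Tendsto (fun n => H (φ n) z) atTop (𝓝 (Hs z)) := by
    simpa only [max_eq_left hz] using hlim z
  exact ⟨Hs, of_tendsto (fun n => hH (φ n)) hlim', φ, hφ, hlim'⟩

theorem aemeasurable_ofReal_comp (hH : H ∈ Adm) {Φ : ℝ → ℝ} (hΦ : Continuous Φ)
    (μ : Measure ℝ) : AEMeasurable (fun z => ENNReal.ofReal (Φ (H z))) (μ.restrict (Ioi 0)) :=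
  (ENNReal.continuous_ofReal.comp_continuousOn
    (hΦ.comp_continuousOn (hH.2.2.2.continuousOn.mono Ioi_subset_Ici_self))).aemeasurable
    measurableSet_Ioi

theorem tendsto_setLIntegral {ν : Measure ℝ} (hν : ∫⁻ z in Ioi 0, ENNReal.ofReal z ∂ν ≠ ∞)
    {H : ℕ → ℝ → ℝ} {Hs : ℝ → ℝ} (hH : ∀ n, H n ∈ Adm)
    (hlim : ∀ z, 0 < z → Tendsto (fun n => H n z) atTop (𝓝 (Hs z))) :
    Tendsto (fun n => ∫⁻ z in Ioi 0, ENNReal.ofReal (H n z) ∂ν) atTop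
      (𝓝 (∫⁻ z in Ioi 0, ENNReal.ofReal (Hs z) ∂ν)) :=
  tendsto_lintegral_of_dominated_convergence' _
    (fun n => aemeasurable_ofReal_comp (hH n) continuous_id ν)
    (fun n => ae_restrict_of_forall_mem measurableSet_Ioi fun _ hz =>
      ENNReal.ofReal_le_ofReal (apply_le (hH n) (le_of_lt hz)))
    hν
    (ae_restrict_of_forall_mem measurableSet_Ioi fun z hz =>
      (ENNReal.continuous_ofReal.tendsto _).comp (hlim z hz))

end Adm

theorem Jfun_le_of_tendsto {μ ν : Measure ℝ} {θ a : ℝ} {ℓ : EReal}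
    (hfin : ENNReal.ofReal (1 + θ) * ∫⁻ z in Ioi 0, ENNReal.ofReal z ∂ν < ∞)
    {H : ℕ → ℝ → ℝ} {Hs : ℝ → ℝ} (hH : ∀ n, H n ∈ Adm) (hHs : Hs ∈ Adm)
    (hlim : ∀ z, 0 < z → Tendsto (fun n => H n z) atTop (𝓝 (Hs z)))
    (hJ : Tendsto (fun n => Jfun μ ν θ a (H n)) atTop (𝓝 ℓ)) :
    Jfun μ ν θ a Hs ≤ ℓ := by
  set ν' := ENNReal.ofReal (1 + θ) • ν
  set A : (ℝ → ℝ) → ℝ≥0∞ := fun H => ∫⁻ z in Ioi 0, ENNReal.ofReal (a / 2 * H z ^ 2 + H z) ∂μ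
  set B : (ℝ → ℝ) → ℝ≥0∞ := fun H => ∫⁻ z in Ioi 0, ENNReal.ofReal (H z) ∂ν'
  have hJ_eq (H : ℝ → ℝ) : Jfun μ ν θ a H = (A H : EReal) - (B H : EReal) := by
    simp only [Jfun, A, B, ν', Measure.restrict_smul, lintegral_smul_measure, smul_eq_mul]
  have hν' : ∫⁻ z in Ioi 0, ENNReal.ofReal z ∂ν' ≠ ∞ := by
    simpa only [ν', Measure.restrict_smul, lintegral_smul_measure, smul_eq_mul] using hfin.ne
  have hB_ne_top {H : ℝ → ℝ} (hH : H ∈ Adm) : B H ≠ ∞ :=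
    ne_top_of_le_ne_top hν' <| setLIntegral_mono (by fun_prop) fun z hz =>
      ENNReal.ofReal_le_ofReal (Adm.apply_le hH (le_of_lt hz))
  have hB : Tendsto (fun n => (B (H n)).toReal) atTop (𝓝 (B Hs).toReal) :=
    (ENNReal.tendsto_toReal (hB_ne_top hHs)).comp (Adm.tendsto_setLIntegral hν' hH hlim)
  have hA : Tendsto (fun n => (A (H n) : EReal)) atTop (𝓝 (ℓ + (B Hs).toReal)) := by
    have hA_eq (n : ℕ) : (A (H n) : EReal) = Jfun μ ν θ a (H n) + (B (H n)).toReal := by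
      rw [hJ_eq, ← EReal.coe_ennreal_toReal (hB_ne_top (hH n)), EReal.sub_add_cancel]
    simp_rw [hA_eq]
    exact (EReal.continuousAt_add (Or.inr (EReal.coe_ne_bot _))
      (Or.inr (EReal.coe_ne_top _))).tendsto.comp
      (hJ.prodMk_nhds ((continuous_coe_real_ereal.tendsto _).comp hB))
  have hFatou : (A Hs : EReal) ≤ ℓ + (B Hs).toReal :=
    calc (A Hs : EReal) ≤ ((liminf (fun n => A (H n)) atTop : ℝ≥0∞) : EReal) :=
          EReal.coe_ennreal_le_coe_ennreal_iff.2 <| lintegral_le_liminf_of_tendsto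
            (fun n => Adm.aemeasurable_ofReal_comp (hH n)
              (Φ := fun x => a / 2 * x ^ 2 + x) (by fun_prop) μ)
            (ae_restrict_of_forall_mem measurableSet_Ioi fun z hz =>
              (ENNReal.continuous_ofReal.tendsto _).comp
                ((tendsto_const_nhds.mul ((hlim z hz).pow 2)).add (hlim z hz)))
      _ = liminf (fun n => (A (H n) : EReal)) atTop :=
          Monotone.map_liminf_of_continuousAt (fun _ _ => EReal.coe_ennreal_le_coe_ennreal_iff.2)
            _ continuous_coe_ennreal_ereal.continuousAt
      _ = ℓ + (B Hs).toReal := hA.liminf_eq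
  rw [hJ_eq, ← EReal.coe_ennreal_toReal (hB_ne_top hHs)]
  exact EReal.sub_le_of_le_add hFatou

theorem stmt_7_general
    (F Fhat : StieltjesFunction ℝ) (θ : ℝ)
    (hfin : ENNReal.ofReal (1 + θ) *
        (∫⁻ z in Set.Ioi (0:ℝ), ENNReal.ofReal z ∂Fhat.measure) < ⊤) :
    ∀ a ∈ Set.Ioi (0:ℝ), ∃ Hstar ∈ Adm,
      Jfun F.measure Fhat.measure θ a Hstar = vfun F.measure Fhat.measure θ a ∧
      ∀ H ∈ Adm, Jfun F.measure Fhat.measure θ a Hstar ≤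
        Jfun F.measure Fhat.measure θ a H := by
  intro a _
  set J := Jfun F.measure Fhat.measure θ a
  have hv : vfun F.measure Fhat.measure θ a = sInf (J '' Adm) := by rw [sInf_image]; rfl
  obtain ⟨u, -, hu, hu_mem⟩ :=
    exists_seq_tendsto_sInf ⟨J 0, mem_image_of_mem J Adm.zero_mem⟩ (OrderBot.bddBelow _)
  choose H hH hJH using fun n => (hu_mem n : ∃ H ∈ Adm, J H = u n)
  obtain ⟨Hs, hHs, φ, hφ, hlim⟩ := Adm.exists_subseq_tendsto hH
  have hmin : J Hs ≤ vfun F.measure Fhat.measure θ a :=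
    Jfun_le_of_tendsto hfin (fun n => hH (φ n)) hHs (fun z hz => hlim z hz.le) <| by
      rw [hv]; exact (hu.comp hφ.tendsto_atTop).congr fun n => (hJH (φ n)).symm
  have hle (H : ℝ → ℝ) (hH : H ∈ Adm) : vfun F.measure Fhat.measure θ a ≤ J H := iInf₂_le H hH
  exact ⟨Hs, hHs, le_antisymm hmin (hle Hs hHs), fun H hH => hmin.trans (hle H hH)⟩

/-- for every a > 0 the infimum defining v(a) is attained on 𝒜. -/
theorem stmt_7
    (F Fhat : StieltjesFunction ℝ) (g : ℝ → ℝ) (θ0 θ : ℝ)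
    (hF_neg : ∀ z : ℝ, z < 0 → F z = 0)
    (hF_top : Tendsto (fun z => F z) atTop (nhds 1))
    (hg_mono : MonotoneOn g (Set.Icc 0 1))
    (hg_left : ∀ p ∈ Set.Ioc (0:ℝ) 1, Tendsto g (nhdsWithin p (Set.Iio p)) (nhds (g p)))
    (hg_zero : g 0 = 0)
    (hg_zero' : Tendsto g (nhdsWithin 0 (Set.Ioi 0)) (nhds 0))
    (hg_one : g 1 = 1)
    (hg_pos : 0 < g (1 - F 0))
    (hθ0 : -1 < θ0)
    (hθ : θ = (1 + θ0) * g (1 - F 0) - 1)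
    (hFhat : ∀ z : ℝ, Fhat z = if z < 0 then 0 else 1 - g (1 - F z) / g (1 - F 0))
    (hFhat_top : Tendsto (fun z => Fhat z) atTop (nhds 1))
    (hfin : ENNReal.ofReal (1 + θ) *
        (∫⁻ z in Set.Ioi (0:ℝ), ENNReal.ofReal z ∂Fhat.measure) < ⊤) :
    ∀ a ∈ Set.Ioi (0:ℝ), ∃ Hstar ∈ Adm,
      Jfun F.measure Fhat.measure θ a Hstar = vfun F.measure Fhat.measure θ a ∧
      ∀ H ∈ Adm, Jfun F.measure Fhat.measure θ a Hstar ≤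
        Jfun F.measure Fhat.measure θ a H :=
  stmt_7_general F Fhat θ hfin
end
end
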